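/- arXiv:math/0303134 — 4 statements merged into one kernel-verified Lean document; each statement's English description precedes it below -/
import Mathlib

section
/- Let A ⊆ B be an extension of commutative rings with B an integral domain, and suppose A ⊆ B ⊆ Frac(A) (i.e., the inclusion is birational). If A is a Noetherian normal (integrally closed) domain and for every height-one prime P of A there exists a prime of B lying over P, then A = B. -/
/-- The conductor ideal `(R : x)` of an element `x` of an `R`-algebra `K`. -/
noncomputable def conductorIdeal (R : Type*) {K : Type*} [CommRing R] [CommRing K] [Algebra R K]
    (x : K) : Ideal R :=
  Submodule.comap (LinearMap.toSpanSingleton R K x) (Subalgebra.toSubmodule (⊥ : Subalgebra R K))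

lemma mem_conductorIdeal {R K : Type*} [CommRing R] [CommRing K] [Algebra R K] {x : K} {a : R} :
    a ∈ conductorIdeal R x ↔ ∃ b, algebraMap R K b = algebraMap R K a * x := by
  simp [conductorIdeal, Algebra.mem_bot, Algebra.smul_def, eq_comm]

lemma aux_dichotomy {R K : Type*} [CommRing R] [IsDomain R] [Field K] [Algebra R K]
    [IsFractionRing R K] [IsNoetherianRing R] [IsIntegrallyClosed R]
    (x : K) (hx : x ∉ (algebraMap R K).range) (I : Ideal R) (hI : I ≠ ⊥)
    (hIx : ∀ p ∈ I, ∃ b, algebraMap R K p * x = algebraMap R K b) :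
    ∃ p ∈ I, ∃ b, b ∉ I ∧ algebraMap R K p * x = algebraMap R K b := by
  by_contra hcon
  push_neg at hcon
  set N : Submodule R K := Submodule.map (Algebra.linearMap R K) I with hNdef
  have hNbot : N ≠ ⊥ := by
    obtain ⟨a, haI, ha0⟩ := Submodule.ne_bot_iff I |>.mp hI
    refine (Submodule.ne_bot_iff N).mpr ⟨algebraMap R K a, ⟨a, haI, rfl⟩, ?_⟩
    simpa using (IsFractionRing.to_map_eq_zero_iff (K := K)).not.mpr ha0
  have hint : IsIntegral R x := by
    refine isIntegral_of_smul_mem_submodule N hNbot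
      (Submodule.FG.map _ (IsNoetherian.noetherian I)) x ?_
    rintro n ⟨p, hp, rfl⟩
    obtain ⟨b, hb⟩ := hIx p hp
    have hbI : b ∈ I := by
      by_contra hbI
      exact hcon p hp b hbI hb
    refine ⟨b, hbI, ?_⟩
    simp only [Algebra.linearMap_apply, smul_eq_mul]
    rw [mul_comm, hb]
  obtain ⟨y, hy⟩ := IsIntegrallyClosed.isIntegral_iff.mp hint
  exact hx ⟨y, hy⟩

/-- If `A` is a Noetherian integrally closed domain and `B` is a subring of `Frac(A)`
containing `A` such that every height-one prime of `A` has a prime of `B` lying over it,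
then `A = B`. -/
theorem stmt_0 (A : Type*) [CommRing A] [IsDomain A] [IsNoetherianRing A]
    [IsIntegrallyClosed A]
    (B : Subalgebra A (FractionRing A))
    (hlift : ∀ P : Ideal A, P.IsPrime → P ≠ ⊥ →
      (∀ Q : Ideal A, Q.IsPrime → Q < P → Q = ⊥) →
      ∃ Q : Ideal B, Q.IsPrime ∧ Q.comap (algebraMap A B) = P) :
    B = ⊥ := by
  by_contra hB
  have hBle : ¬ B ≤ ⊥ := fun h => hB (le_antisymm h bot_le)
  obtain ⟨x0, hx0B, hx0A⟩ := SetLike.not_le_iff_exists.mp hBle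
  obtain ⟨P0, hP0T, hPmax⟩ :=
    (set_has_maximal_iff_noetherian.mpr (inferInstance : IsNoetherianRing A))
      ((fun y => conductorIdeal A y) '' {y | y ∈ B ∧ y ∉ (⊥ : Subalgebra A (FractionRing A))})
      ⟨_, ⟨x0, ⟨hx0B, hx0A⟩, rfl⟩⟩
  obtain ⟨x, ⟨hxB, hxA⟩, hcondeq⟩ := hP0T
  subst hcondeq
  -- basic facts about `P = conductorIdeal A x`
  have hPtop : conductorIdeal A x ≠ ⊤ := by
    intro h
    have h1 : (1 : A) ∈ conductorIdeal A x := h ▸ Submodule.mem_top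
    obtain ⟨b, hb⟩ := mem_conductorIdeal.mp h1
    exact hxA (Algebra.mem_bot.mpr ⟨b, by simpa using hb⟩)
  have hPbot : conductorIdeal A x ≠ ⊥ := by
    obtain ⟨⟨a, s⟩, hs⟩ := IsLocalization.surj (nonZeroDivisors A) x
    have hsP : (s : A) ∈ conductorIdeal A x :=
      mem_conductorIdeal.mpr ⟨a, by rw [mul_comm] at hs; exact hs.symm⟩
    intro h
    rw [h] at hsP
    exact nonZeroDivisors.ne_zero s.2 (Ideal.mem_bot.mp hsP)
  have hPprime : (conductorIdeal A x).IsPrime := by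
    refine ⟨hPtop, ?_⟩
    intro a b hab
    by_cases hb : b ∈ conductorIdeal A x
    · exact Or.inr hb
    refine Or.inl ?_
    have hyB : algebraMap A (FractionRing A) b * x ∈ B := B.mul_mem (B.algebraMap_mem b) hxB
    have hyA : algebraMap A (FractionRing A) b * x ∉ (⊥ : Subalgebra A (FractionRing A)) := by
      intro h
      obtain ⟨c, hc⟩ := Algebra.mem_bot.mp h
      exact hb (mem_conductorIdeal.mpr ⟨c, hc⟩)
    have hle : conductorIdeal A x ≤ conductorIdeal A (algebraMap A (FractionRing A) b * x) := by
      intro c hc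
      obtain ⟨d, hd⟩ := mem_conductorIdeal.mp hc
      refine mem_conductorIdeal.mpr ⟨b * d, ?_⟩
      rw [map_mul, hd]; ring
    have heq : conductorIdeal A x = conductorIdeal A (algebraMap A (FractionRing A) b * x) :=
      (lt_or_eq_of_le hle).resolve_left (hPmax _ ⟨_, ⟨hyB, hyA⟩, rfl⟩)
    obtain ⟨e, he⟩ := mem_conductorIdeal.mp hab
    rw [heq]
    refine mem_conductorIdeal.mpr ⟨e, ?_⟩
    rw [he, map_mul]; ring
  haveI := hPprime
  have hPcond : ∀ p ∈ conductorIdeal A x,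
      ∃ c, algebraMap A (FractionRing A) p * x = algebraMap A (FractionRing A) c := by
    intro p hp
    obtain ⟨c, hc⟩ := mem_conductorIdeal.mp hp
    exact ⟨c, hc.symm⟩
  have hx' : x ∉ (algebraMap A (FractionRing A)).range := by
    rintro ⟨a, ha⟩
    exact hxA (Algebra.mem_bot.mpr ⟨a, ha⟩)
  -- localization at P
  letI : IsNoetherianRing (Localization.AtPrime (conductorIdeal A x)) :=
    IsLocalization.isNoetherianRing (conductorIdeal A x).primeCompl _ inferInstance
  letI : IsIntegrallyClosed (Localization.AtPrime (conductorIdeal A x)) :=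
    isIntegrallyClosed_of_isLocalization _ (conductorIdeal A x).primeCompl
      (conductorIdeal A x).primeCompl_le_nonZeroDivisors
  have hxR : x ∉ (algebraMap (Localization.AtPrime (conductorIdeal A x)) (FractionRing A)).range := by
    rintro ⟨r, hr⟩
    obtain ⟨a, s, hmk⟩ := IsLocalization.exists_mk'_eq (conductorIdeal A x).primeCompl r
    have h1 := IsLocalization.mk'_spec (Localization.AtPrime (conductorIdeal A x)) a s
    rw [hmk] at h1
    have h2 := congrArg (algebraMap (Localization.AtPrime (conductorIdeal A x)) (FractionRing A)) h1
    rw [map_mul, hr, ← IsScalarTower.algebraMap_apply, ← IsScalarTower.algebraMap_apply,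
      mul_comm] at h2
    exact s.2 (mem_conductorIdeal.mpr ⟨a, h2.symm⟩)
  have hmax_cond : ∀ r ∈ IsLocalRing.maximalIdeal (Localization.AtPrime (conductorIdeal A x)),
      ∃ b, algebraMap (Localization.AtPrime (conductorIdeal A x)) (FractionRing A) r * x
        = algebraMap (Localization.AtPrime (conductorIdeal A x)) (FractionRing A) b := by
    intro r hr
    rw [← Localization.AtPrime.map_eq_maximalIdeal] at hr
    have hsub : (conductorIdeal A x).map
        (algebraMap A (Localization.AtPrime (conductorIdeal A x)))
        ≤ conductorIdeal (Localization.AtPrime (conductorIdeal A x)) x := by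
      rw [Ideal.map_le_iff_le_comap]
      intro p hp
      obtain ⟨c, hc⟩ := hPcond p hp
      refine Ideal.mem_comap.mpr (mem_conductorIdeal.mpr ⟨algebraMap A _ c, ?_⟩)
      rw [← IsScalarTower.algebraMap_apply, ← IsScalarTower.algebraMap_apply, hc]
    obtain ⟨b, hb⟩ := mem_conductorIdeal.mp (hsub hr)
    exact ⟨b, hb.symm⟩
  have hmbot : IsLocalRing.maximalIdeal (Localization.AtPrime (conductorIdeal A x)) ≠ ⊥ := by
    obtain ⟨s, hsP, hs0⟩ := (Submodule.ne_bot_iff _).mp hPbot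
    refine (Submodule.ne_bot_iff _).mpr ⟨algebraMap A _ s, ?_, ?_⟩
    · rw [← Localization.AtPrime.map_eq_maximalIdeal]
      exact Ideal.mem_map_of_mem _ hsP
    · exact fun h => hs0 (IsLocalization.injective _
        (conductorIdeal A x).primeCompl_le_nonZeroDivisors (h.trans (map_zero _).symm))
  obtain ⟨p', hp'm, b', hb'm, hpb'⟩ := aux_dichotomy x hxR _ hmbot hmax_cond
  have hb'unit : IsUnit b' := by
    by_contra h
    exact hb'm ((IsLocalRing.mem_maximalIdeal _).mpr (mem_nonunits_iff.mpr h))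
  obtain ⟨u, rfl⟩ := hb'unit
  have hprin : (IsLocalRing.maximalIdeal (Localization.AtPrime (conductorIdeal A x))).IsPrincipal := by
    refine ⟨⟨p', le_antisymm ?_ ?_⟩⟩
    · intro r hr
      obtain ⟨c, hc⟩ := hmax_cond r hr
      have hre : r * ↑u = p' * c := by
        apply IsFractionRing.injective (Localization.AtPrime (conductorIdeal A x)) (FractionRing A)
        rw [map_mul, map_mul, ← hpb', mul_left_comm, hc]
      refine Ideal.mem_span_singleton'.mpr ⟨c * ↑u⁻¹, ?_⟩
      have : r = p' * c * ↑u⁻¹ := by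
        rw [← hre, mul_assoc, Units.mul_inv, mul_one]
      rw [this]; ring
    · exact Submodule.span_le.mpr (Set.singleton_subset_iff.mpr hp'm)
  have hdim := ((tfae_of_isNoetherianRing_of_isLocalRing_of_isDomain
    (Localization.AtPrime (conductorIdeal A x))).out 4 3).mp hprin
  have hht1 : ∀ Q : Ideal A, Q.IsPrime → Q < conductorIdeal A x → Q = ⊥ := by
    intro Q hQ hQP
    have hdisj : Disjoint ((conductorIdeal A x).primeCompl : Set A) (Q : Set A) := by
      rw [Set.disjoint_left]
      intro a haC haQ
      exact haC (hQP.le haQ)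
    have hQ' := IsLocalization.isPrime_of_isPrime_disjoint (conductorIdeal A x).primeCompl
      (Localization.AtPrime (conductorIdeal A x)) Q hQ hdisj
    have hcomap := IsLocalization.comap_map_of_isPrime_disjoint (conductorIdeal A x).primeCompl
      (Localization.AtPrime (conductorIdeal A x)) hQ hdisj
    by_cases hbot : Q.map (algebraMap A (Localization.AtPrime (conductorIdeal A x))) = ⊥
    · rw [← hcomap, hbot]
      refine le_antisymm ?_ bot_le
      intro a ha
      rw [Ideal.mem_comap, Ideal.mem_bot] at ha
      exact Ideal.mem_bot.mpr (IsLocalization.injective _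
        (conductorIdeal A x).primeCompl_le_nonZeroDivisors (ha.trans (map_zero _).symm))
    · exfalso
      have hQm := hdim.2 _ hbot hQ'
      rw [hQm] at hcomap
      have hPm := IsLocalization.AtPrime.comap_maximalIdeal
        (Localization.AtPrime (conductorIdeal A x)) (conductorIdeal A x)
      exact hQP.ne (hcomap.symm.trans hPm)
  obtain ⟨Q, hQprime, hQcomap⟩ := hlift _ hPprime hPbot hht1
  obtain ⟨p, hpP, b, hbP, hpb⟩ := aux_dichotomy x hx' _ hPbot hPcond
  have hpQ : algebraMap A B p ∈ Q := by
    rw [← hQcomap] at hpP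
    exact hpP
  have hmul : algebraMap A B p * ⟨x, hxB⟩ = algebraMap A B b := by
    apply Subtype.ext
    exact hpb
  have hbQ : b ∈ Q.comap (algebraMap A B) := by
    rw [Ideal.mem_comap, ← hmul]
    exact Ideal.mul_mem_right _ _ hpQ
  rw [hQcomap] at hbQ
  exact hbP hbQ
end

section
/- Let R be a Noetherian ring, B an R-algebra which is a subring of a finitely generated R-algebra C such that B is a direct summand of C as a B-module (e.g. B is a pure subring of C). Then the nilradical of B is a finitely generated ideal of B. -/
set_option synthInstance.maxHeartbeats 1000000

/-- If `R` is Noetherian, `C` a finitely generated `R`-algebra and `B ⊆ C` a subalgebra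
which is a direct summand of `C` as a `B`-module (there is a `B`-linear retraction
`C → B`), then the nilradical of `B` is a finitely generated ideal. -/
theorem stmt_4 (R C : Type*) [CommRing R] [CommRing C] [Algebra R C]
    [IsNoetherianRing R] [Algebra.FiniteType R C]
    (B : Subalgebra R C)
    (f : C →ₗ[B] B) (hf : ∀ b : B, f (b : C) = b) :
    (nilradical B).FG := by
  have hC : IsNoetherianRing C := Algebra.FiniteType.isNoetherianRing R C
  -- Key: for any ideal I of B, comap (map I) = I.
  have key : ∀ I : Ideal B, Ideal.comap (algebraMap B C) (Ideal.map (algebraMap B C) I) = I := by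
    intro I
    apply le_antisymm
    · intro x hx
      have hx' : (x : C) ∈ Ideal.span ((algebraMap B C) '' (I : Set B)) := hx
      rw [Ideal.span, Submodule.mem_span_set] at hx'
      obtain ⟨c, hsupp, hsum⟩ := hx'
      have : f (x : C) ∈ I := by
        rw [← hsum, Finsupp.sum, map_sum]
        apply Ideal.sum_mem
        intro i hi
        obtain ⟨b, hbI, hbi⟩ := hsupp hi
        have : c i • i = b • (c i) := by
          rw [← hbi]
          simp [Algebra.smul_def, smul_eq_mul, mul_comm]
        rw [this, map_smul]
        exact I.mul_mem_right _ hbI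
      rwa [hf x] at this
    · exact Ideal.le_comap_map
  -- The map on ideals is strictly monotone, so B is Noetherian.
  have hinj : Function.Injective (Ideal.map (algebraMap B C) : Ideal B → Ideal C) := by
    intro I J h
    rw [← key I, ← key J, h]
  have hmono : StrictMono (Ideal.map (algebraMap B C) : Ideal B → Ideal C) :=
    (Monotone.strictMono_of_injective (fun _ _ h => Ideal.map_mono h) hinj)
  have : IsNoetherianRing B := by
    rw [isNoetherianRing_iff, isNoetherian_iff']
    have : WellFoundedGT (Ideal C) := (isNoetherian_iff').mp hC
    exact hmono.wellFoundedGT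
  exact IsNoetherian.noetherian _
end

section
/- Let B be a commutative Noetherian ring whose nilradical N satisfies: B/N is a finitely generated algebra over a Noetherian ring R, and B is Noetherian. If moreover B is a finitely generated B-submodule situation, i.e., N^k = 0 for some k and each N^i/N^{i+1} is a finitely generated B/N-module, then B is a finitely generated R-algebra. -/
open scoped Pointwise

/-- Reduction to the reduced case: let `B` be a Noetherian `R`-algebra over a Noetherian
ring `R`, with nilradical `N`.  If `B/N` is a finitely generated `R`-algebra, `N^k = 0`
for some `k`, and each `N^i/N^(i+1)` is a finitely generated module (finiteness over
`B/N` being equivalent to finiteness over `B`, since `N` kills these subquotients),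
then `B` is a finitely generated `R`-algebra. -/
theorem stmt_5 (R B : Type*) [CommRing R] [CommRing B] [Algebra R B]
    [IsNoetherianRing R] [IsNoetherianRing B]
    (hred : Algebra.FiniteType R (B ⧸ nilradical B))
    (hnilp : ∃ k : ℕ, (nilradical B) ^ k = ⊥)
    (hfg : ∀ i : ℕ, Module.Finite B
      (↥((nilradical B) ^ i) ⧸
        (Submodule.comap ((nilradical B) ^ i).subtype ((nilradical B) ^ (i + 1))))) :
    Algebra.FiniteType R B := by
  classical
  obtain ⟨k, hk⟩ := hnilp
  set N : Ideal B := nilradical B with hN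
  -- generators of N as an ideal
  obtain ⟨sN, hsN⟩ : N.FG := IsNoetherian.noetherian N
  -- finite generators of B/N as an R-algebra
  obtain ⟨T, hT⟩ := hred.1
  -- lift generators of B/N to B
  choose f hf using Ideal.Quotient.mk_surjective (I := N)
  set t : Finset B := T.image f with ht
  set A' : Subalgebra R B := Algebra.adjoin R (↑(t ∪ sN) : Set B) with hA'
  have hs_sub : (↑sN : Set B) ⊆ (A' : Set B) := by
    intro x hx
    exact Algebra.subset_adjoin (by simp [hx])
  have ht_sub : (↑t : Set B) ⊆ (A' : Set B) := by
    intro x hx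
    exact Algebra.subset_adjoin (by simp [hx])
  -- the quotient map as an algebra hom
  set π : B →ₐ[R] B ⧸ N := Ideal.Quotient.mkₐ R N with hπ
  -- base case : B = A' + N
  have hbase : ∀ b : B, ∃ a ∈ A', b - a ∈ N := by
    intro b
    have himg : π '' (↑t : Set B) = (↑T : Set (B ⧸ N)) := by
      ext y
      simp only [ht, Finset.coe_image, Set.image_image, Set.mem_image, Finset.mem_coe]
      constructor
      · rintro ⟨x, hx, rfl⟩
        simpa [hπ, Ideal.Quotient.mkₐ_eq_mk, hf] using hx
      · intro hy
        exact ⟨y, hy, by simp [hπ, Ideal.Quotient.mkₐ_eq_mk, hf]⟩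
    have : π b ∈ (Algebra.adjoin R (↑t : Set B)).map π := by
      rw [AlgHom.map_adjoin, himg, hT]
      trivial
    obtain ⟨a, ha, hab⟩ := this
    refine ⟨a, Algebra.adjoin_mono (by simp) ha, ?_⟩
    simp only [hπ, Ideal.Quotient.mkₐ_eq_mk] at hab
    exact Ideal.Quotient.eq.mp hab.symm
  -- products of m elements of sN lie in A'
  have hpow_sub : ∀ m : ℕ, ((↑sN : Set B) ^ m) ⊆ (A' : Set B) := by
    intro m
    induction m with
    | zero =>
      rw [pow_zero]
      rintro x hx
      rw [Set.mem_one] at hx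
      subst hx
      exact A'.one_mem
    | succ m ih =>
      rw [pow_succ]
      rintro x hx
      obtain ⟨y, hy, z, hz, rfl⟩ := Set.mem_mul.1 hx
      exact A'.mul_mem (ih hy) (hs_sub hz)
  -- key step
  have hkey : ∀ m : ℕ, (N ^ m).restrictScalars R ≤
      A'.toSubmodule ⊔ (N ^ (m + 1)).restrictScalars R := by
    intro m x hx
    have hspan : Submodule.span B (↑sN : Set B) = N := hsN
    have hx' : x ∈ Submodule.span B ((↑sN : Set B) ^ m) := by
      rw [← Submodule.span_pow, hspan]
      exact hx
    have main : ∀ y ∈ Submodule.span B ((↑sN : Set B) ^ m), ∀ b : B,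
        b * y ∈ A'.toSubmodule ⊔ (N ^ (m + 1)).restrictScalars R := by
      intro y hy
      induction hy using Submodule.span_induction with
      | mem z hz =>
        intro b
        obtain ⟨a, haA, han⟩ := hbase b
        have hzA : z ∈ A' := hpow_sub m hz
        have hzN : z ∈ N ^ m := by
          rw [← hspan, Submodule.span_pow]
          exact Submodule.subset_span hz
        have : b * z = a * z + (b - a) * z := by ring
        rw [this]
        refine Submodule.add_mem _ ?_ ?_
        · exact Submodule.mem_sup_left (A'.mul_mem haA hzA)
        · refine Submodule.mem_sup_right ?_
          show (b - a) * z ∈ N ^ (m + 1)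
          rw [pow_succ']
          exact Ideal.mul_mem_mul han hzN
      | zero =>
        intro b
        rw [mul_zero]
        exact Submodule.zero_mem _
      | add u v _ _ hu hv =>
        intro b
        rw [mul_add]
        exact Submodule.add_mem _ (hu b) (hv b)
      | smul c u _ hu =>
        intro b
        rw [smul_eq_mul, ← mul_assoc]
        exact hu (b * c)
    have := main x hx' 1
    rwa [one_mul] at this
  -- induction: B = A' + N^m for all m
  have hmain : ∀ m : ℕ, (⊤ : Submodule R B) ≤
      A'.toSubmodule ⊔ (N ^ m).restrictScalars R := by
    intro m
    induction m with
    | zero =>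
      intro x _
      refine Submodule.mem_sup_right ?_
      show x ∈ N ^ 0
      rw [pow_zero, Ideal.one_eq_top]
      trivial
    | succ m ih =>
      refine le_trans ih (sup_le le_sup_left (le_trans (hkey m) ?_))
      exact sup_le le_sup_left le_sup_right
  -- conclude at m = k
  have htop : A' = ⊤ := by
    have := hmain k
    rw [hk] at this
    have hbot : ((⊥ : Ideal B).restrictScalars R) = ⊥ := rfl
    rw [hbot, sup_bot_eq] at this
    exact Subalgebra.toSubmodule.injective (top_le_iff.1 this)
  exact ⟨⟨t ∪ sN, htop⟩⟩
end

section
/- Let A be a Noetherian integrally closed domain (normal domain), B a subring of Frac(A) containing A (so Spec B → Spec A is birational and affine), and suppose that the image of Spec B → Spec A is an open subset U of Spec A and the map Spec B → U is surjective. Then B is isomorphic to the ring of sections O_{Spec A}(U), and if in addition the image is all of Spec A, then A = B. -/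
open scoped nonZeroDivisors

theorem fogarty_key {R : Type*} [CommRing R] [IsDomain R] [IsNoetherianRing R]
    [IsIntegrallyClosed R] {K : Type*} [Field K] [Algebra R K] [IsFractionRing R K]
    (x : K) (hx : x ∉ Set.range (algebraMap R K)) :
    ∃ p : Ideal R, p.IsPrime ∧ ∃ t ∈ p, ∃ u ∉ p,
      algebraMap R K u = x * algebraMap R K t := by
  classical
  set I : Ideal R :=
    { carrier := {s | ∃ a, algebraMap R K a = x * algebraMap R K s}
      zero_mem' := ⟨0, by simp⟩
      add_mem' := by
        rintro a b ⟨c, hc⟩ ⟨d, hd⟩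
        exact ⟨c + d, by simp [map_add, hc, hd, mul_add]⟩
      smul_mem' := by
        rintro c s ⟨a, ha⟩
        refine ⟨c * a, ?_⟩
        simp only [smul_eq_mul, map_mul, ha]; ring } with hI
  have memI : ∀ s : R, s ∈ I ↔ ∃ a, algebraMap R K a = x * algebraMap R K s := fun s => Iff.rfl
  have hInetop : I ≠ ⊤ := by
    intro h
    obtain ⟨a, ha⟩ := (memI 1).mp (h ▸ Submodule.mem_top)
    exact hx ⟨a, by simpa using ha⟩
  haveI : Nontrivial (R ⧸ I) := Ideal.Quotient.nontrivial_iff.mpr hInetop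
  obtain ⟨p, hp⟩ := associatedPrimes.nonempty R (R ⧸ I)
  obtain ⟨hpprime, c0, hc0⟩ := isAssociatedPrime_iff.mp hp
  obtain ⟨c, rfl⟩ := Ideal.Quotient.mk_surjective c0
  have memp : ∀ s : R, s ∈ p ↔ s * c ∈ I := by
    intro s
    rw [hc0, Submodule.mem_colon_singleton, Submodule.mem_bot, Algebra.smul_def,
      Ideal.Quotient.algebraMap_eq, ← map_mul, Ideal.Quotient.eq_zero_iff_mem]
  have h1p : (1 : R) ∉ p := fun h => hpprime.ne_top ((Ideal.eq_top_iff_one p).mpr h)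
  set y : K := x * algebraMap R K c with hy
  have memp' : ∀ s : R, s ∈ p ↔ ∃ a, algebraMap R K a = y * algebraMap R K s := by
    intro s
    rw [memp s, memI]
    constructor <;> rintro ⟨a, ha⟩ <;> refine ⟨a, ?_⟩ <;>
      rw [ha] <;> simp only [map_mul, hy] <;> ring
  by_cases H : ∀ t ∈ p, ∀ a : R, algebraMap R K a = y * algebraMap R K t → a ∈ p
  · -- y stabilizes p, so y is integral over R, contradiction
    exfalso
    set N : Submodule R K := Submodule.map (Algebra.linearMap R K) p with hN
    have hIlep : I ≤ p := fun s hs => (memp s).mpr (I.mul_mem_right c hs)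
    obtain ⟨⟨a, s⟩, e⟩ := IsLocalization.surj R⁰ x
    have hsI : (s : R) ∈ I := ⟨a, e.symm⟩
    have hsne : algebraMap R K (s : R) ≠ 0 := by
      simpa using (IsFractionRing.injective R K).ne_iff.mpr
        (nonZeroDivisors.ne_zero s.2)
    have hNne : N ≠ ⊥ := by
      intro h
      apply hsne
      have : algebraMap R K (s : R) ∈ N := ⟨s, hIlep hsI, rfl⟩
      simpa [h] using this
    have hNfg : N.FG := (IsNoetherian.noetherian p).map _
    have hstab : ∀ n ∈ N, y • n ∈ N := by
      rintro n ⟨t, ht, rfl⟩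
      obtain ⟨a, ha⟩ := (memp' t).mp ht
      exact ⟨a, H t ht a ha, by simpa [smul_eq_mul] using ha⟩
    have hint : IsIntegral R y := isIntegral_of_smul_mem_submodule N hNne hNfg y hstab
    obtain ⟨b, hb⟩ := IsIntegrallyClosed.isIntegral_iff.mp hint
    exact h1p ((memp 1).mpr (by rw [one_mul]; exact ⟨b, by rw [hb]⟩))
  · push_neg at H
    obtain ⟨t, ht, a, ha, hap⟩ := H
    refine ⟨p, hpprime, c * t, p.mul_mem_left c ht, a, hap, ?_⟩
    rw [ha]; simp only [map_mul, hy]; ring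

theorem fogarty_key_away {A : Type*} [CommRing A] [IsDomain A] [IsNoetherianRing A]
    [IsIntegrallyClosed A] (f : A) (hf : f ≠ 0) (x : FractionRing A)
    (hx : ∀ (n : ℕ) (a : A), algebraMap A (FractionRing A) a ≠
      x * algebraMap A (FractionRing A) (f ^ n)) :
    ∃ p : Ideal A, p.IsPrime ∧ f ∉ p ∧ ∃ t ∈ p, ∃ u ∉ p,
      algebraMap A (FractionRing A) u = x * algebraMap A (FractionRing A) t := by
  set M := Submonoid.powers f with hM'
  have hM : M ≤ A⁰ := powers_le_nonZeroDivisors_of_noZeroDivisors hf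
  set R := Localization.Away f with hR
  haveI : IsDomain R := IsLocalization.isDomain_localization hM
  let g : R →+* (FractionRing A) := IsLocalization.map _ (T := A⁰) (RingHom.id A) hM
  letI := g.toAlgebra
  haveI : IsScalarTower A R (FractionRing A) := IsScalarTower.of_algebraMap_eq'
    (by ext a; rw [RingHom.algebraMap_toAlgebra, RingHom.comp_apply]; exact (IsLocalization.map_eq (S := R) (Q := FractionRing A) (T := A⁰) (g := RingHom.id A) hM a).symm)
  haveI : IsFractionRing R (FractionRing A) := IsFractionRing.isFractionRing_of_isDomain_of_isLocalization M R (FractionRing A)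
  haveI : IsNoetherianRing R := IsLocalization.isNoetherianRing M R inferInstance
  haveI : IsIntegrallyClosed R := isIntegrallyClosed_of_isLocalization R M hM
  have hxR : x ∉ Set.range (algebraMap R (FractionRing A)) := by
    rintro ⟨z, rfl⟩
    obtain ⟨⟨a, s⟩, e⟩ := IsLocalization.surj M z
    obtain ⟨n, hn⟩ := s.2
    apply hx n a
    have h2 := congrArg (algebraMap R (FractionRing A)) e
    rw [map_mul, ← IsScalarTower.algebraMap_apply, ← IsScalarTower.algebraMap_apply] at h2
    have hn' : f ^ n = (s : A) := hn
    rw [hn']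
    exact h2.symm
  obtain ⟨p', hp', t, ht, u, hu, heq⟩ := fogarty_key (R := R) (K := FractionRing A) x hxR
  haveI := hp'
  set p := p'.comap (algebraMap A R) with hp
  have hpprime : p.IsPrime := Ideal.IsPrime.comap _
  have hfp : f ∉ p := by
    intro h
    exact hp'.ne_top (p'.eq_top_of_isUnit_mem h
      (IsLocalization.map_units R ⟨f, Submonoid.mem_powers f⟩))
  obtain ⟨⟨t₀, s⟩, et⟩ := IsLocalization.surj M t
  obtain ⟨⟨u₀, s'⟩, eu⟩ := IsLocalization.surj M u
  have hspow : ∀ w : M, (w : A) ∉ p := by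
    rintro ⟨w, n, rfl⟩ h
    exact hfp (hpprime.mem_of_pow_mem n h)
  have ht₀ : t₀ ∈ p := by
    show algebraMap A R t₀ ∈ p'
    rw [← et]
    exact p'.mul_mem_right _ ht
  have hu₀ : u₀ ∉ p := by
    intro h
    have h2 : u * algebraMap A R (s' : A) ∈ p' := by rw [eu]; exact h
    rcases hp'.mem_or_mem h2 with h3 | h3
    · exact hu h3
    · exact hspow s' h3
  refine ⟨p, hpprime, hfp, t₀ * s', p.mul_mem_right _ ht₀, u₀ * s, ?_, ?_⟩
  · intro hc
    rcases hpprime.mem_or_mem hc with h3 | h3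
    · exact hu₀ h3
    · exact hspow s h3
  · have Et := congrArg (algebraMap R (FractionRing A)) et
    have Eu := congrArg (algebraMap R (FractionRing A)) eu
    rw [map_mul, ← IsScalarTower.algebraMap_apply, ← IsScalarTower.algebraMap_apply] at Et Eu
    rw [map_mul, map_mul, ← Eu, ← Et, heq]
    ring

theorem fogarty_mem_comap {A : Type*} [CommRing A] (B : Subalgebra A (FractionRing A))
    {x : FractionRing A} (hx : x ∈ B) (q : PrimeSpectrum B) {t u : A}
    (ht : t ∈ q.asIdeal.comap (algebraMap A B))
    (heq : algebraMap A (FractionRing A) u = x * algebraMap A (FractionRing A) t) :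
    u ∈ q.asIdeal.comap (algebraMap A B) := by
  rw [Ideal.mem_comap] at ht ⊢
  have key : algebraMap A B u = (⟨x, hx⟩ : B) * algebraMap A B t := by
    apply Subtype.coe_injective
    push_cast
    exact heq
  rw [key]
  exact q.asIdeal.mul_mem_left _ ht

set_option synthInstance.maxHeartbeats 400000 in
theorem fogarty_reverse {A K : Type*} [CommRing A] [Field K] [Algebra A K]
    (B : Subalgebra A K) (x : K)
    (h : ∀ q : PrimeSpectrum B, ∃ a s : A,
      s ∉ q.asIdeal.comap (algebraMap A B) ∧ x * algebraMap A K s = algebraMap A K a) :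
    x ∈ B := by
  by_contra hxB
  set J : Ideal B :=
    { carrier := {b : B | (b : K) * x ∈ B}
      zero_mem' := by
        show ((0 : B) : K) * x ∈ B
        simp only [ZeroMemClass.coe_zero, zero_mul]
        exact zero_mem B
      add_mem' := by
        intro a b ha hb
        show ((a + b : B) : K) * x ∈ B
        push_cast
        rw [add_mul]
        exact B.add_mem ha hb
      smul_mem' := by
        intro c b hb
        show ((c • b : B) : K) * x ∈ B
        have hc : ((c • b : B) : K) = (c : K) * b := by
          rfl
        rw [hc, mul_assoc]
        exact B.mul_mem c.2 hb } with hJ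
  have memJ : ∀ b : B, b ∈ J ↔ (b : K) * x ∈ B := fun b => Iff.rfl
  have hJtop : J ≠ ⊤ := by
    intro hc
    have h1 : ((1 : B) : K) * x ∈ B := (memJ 1).mp (hc ▸ Submodule.mem_top)
    rw [OneMemClass.coe_one, one_mul] at h1
    exact hxB h1
  obtain ⟨m, hm, hJm⟩ := Ideal.exists_le_maximal J hJtop
  obtain ⟨a, s, hs, hxs⟩ := h ⟨m, hm.isPrime⟩
  apply hs
  rw [Ideal.mem_comap]
  apply hJm
  rw [memJ]
  have hcoe : ((algebraMap A B s : B) : K) = algebraMap A K s :=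
    (IsScalarTower.algebraMap_apply A B K s).symm
  rw [hcoe, mul_comm, hxs]
  exact B.algebraMap_mem a

/-- Fogarty's Lemma 3 (affine form): let `A` be a Noetherian integrally closed domain and
`A ⊆ B ⊆ Frac A` with the image `U` of `Spec B → Spec A` open.  Then `B` is the ring of
sections `O_{Spec A}(U) = ⋂_{p ∈ U} A_p` inside `Frac A`; and if the image is all of
`Spec A` then `A = B`. -/
theorem stmt_15 (A : Type*) [CommRing A] [IsDomain A] [IsNoetherianRing A]
    [IsIntegrallyClosed A]
    (B : Subalgebra A (FractionRing A))
    (hopen : IsOpen (Set.range (PrimeSpectrum.comap (algebraMap A B)))) :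
    (∀ x : FractionRing A, x ∈ B ↔
      ∀ p ∈ Set.range (PrimeSpectrum.comap (algebraMap A B)),
        ∃ a s : A, s ∉ p.asIdeal ∧
          x * algebraMap A (FractionRing A) s = algebraMap A (FractionRing A) a) ∧
    (Set.range (PrimeSpectrum.comap (algebraMap A B)) = Set.univ → B = ⊥) := by
  classical
  constructor
  · intro x
    constructor
    · intro hxB p hp
      obtain ⟨V, ⟨f, rfl⟩, hpV, hVU⟩ :=
        (PrimeSpectrum.isTopologicalBasis_basic_opens (R := A)).exists_subset_of_mem_open hp hopen
      have hfp : f ∉ p.asIdeal := hpV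
      have hf0 : f ≠ 0 := fun h => hfp (h ▸ p.asIdeal.zero_mem)
      by_cases hcase : ∃ (n : ℕ) (a : A), algebraMap A (FractionRing A) a =
          x * algebraMap A (FractionRing A) (f ^ n)
      · obtain ⟨n, a, h⟩ := hcase
        exact ⟨a, f ^ n, fun hc => hfp (p.isPrime.mem_of_pow_mem n hc), h.symm⟩
      · push_neg at hcase
        exfalso
        obtain ⟨p₁, hp₁, hfp₁, t, ht, u, hu, heq⟩ := fogarty_key_away f hf0 x hcase
        have hPU : (⟨p₁, hp₁⟩ : PrimeSpectrum A) ∈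
            Set.range (PrimeSpectrum.comap (algebraMap A B)) := hVU hfp₁
        obtain ⟨q, hq⟩ := hPU
        have hcomap : q.asIdeal.comap (algebraMap A B) = p₁ :=
          congrArg PrimeSpectrum.asIdeal hq
        apply hu
        rw [← hcomap]
        exact fogarty_mem_comap B hxB q (by rw [hcomap]; exact ht) heq
    · intro h
      apply fogarty_reverse
      intro q
      obtain ⟨a, s, hs, hxs⟩ := h (PrimeSpectrum.comap (algebraMap A B) q) ⟨q, rfl⟩
      exact ⟨a, s, hs, hxs⟩
  · intro hsurj
    refine le_antisymm ?_ bot_le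
    intro x hxB
    rw [Algebra.mem_bot]
    by_contra hxr
    obtain ⟨p₁, hp₁, t, ht, u, hu, heq⟩ := fogarty_key (K := FractionRing A) x hxr
    have hPU : (⟨p₁, hp₁⟩ : PrimeSpectrum A) ∈
        Set.range (PrimeSpectrum.comap (algebraMap A B)) := hsurj ▸ Set.mem_univ _
    obtain ⟨q, hq⟩ := hPU
    have hcomap : q.asIdeal.comap (algebraMap A B) = p₁ :=
      congrArg PrimeSpectrum.asIdeal hq
    apply hu
    rw [← hcomap]
    exact fogarty_mem_comap B hxB q (by rw [hcomap]; exact ht) heq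
end
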